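/- arXiv:2503.21245 — 2 statements merged into one kernel-verified Lean document; each statement's English description precedes it below -/
import Mathlib

section
/- Let $W, M : (0,\infty) \to [0,\infty)$ be differentiable functions with $W$ nondecreasing, and suppose that $\partial_r W(r) \geq 2r\big(\partial_r \sqrt{M(r)}\big)^2$ for all $r > 0$ (where $\sqrt{M}$ is differentiable). Then for every $r > 0$ and every $\eta \in (0,1)$, $M(r) \leq |\log\eta|\,\big(W(r) - W(\eta r)\big) + 2\,M(\eta r)$. -/
/-!
Instead of integrating and applying Cauchy–Schwarz, we use its differential form: if
`(f')² ≤ φ' g'` with `φ' > 0`, then for every `t` the function `t² φ - 2 t f + g` is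
nondecreasing, since `φ' (t² φ' - 2 t f' + g') ≥ (t φ' - f')²`. Comparing its values at `a ≤ b`
gives a quadratic in `t` that is nonnegative everywhere, and its discriminant yields
`(f b - f a)² ≤ (φ b - φ a) (g b - g a)`. With `f = √M`, `g = W`, `φ = log / 2` on `[η r, r]`
this reads `(√M(r) - √M(η r))² ≤ |log η| (W(r) - W(η r)) / 2`, and
`x² ≤ 2 (x - y)² + 2 y²` finishes.
-/

open Set

section CauchySchwarz

variable {f g φ : ℝ → ℝ} {a b : ℝ}
  (hf : ∀ x ∈ Icc a b, DifferentiableAt ℝ f x) (hg : ∀ x ∈ Icc a b, DifferentiableAt ℝ g x)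
  (hφ : ∀ x ∈ Icc a b, DifferentiableAt ℝ φ x) (hφ_pos : ∀ x ∈ Ioo a b, 0 < deriv φ x)
  (hfgφ : ∀ x ∈ Ioo a b, deriv f x ^ 2 ≤ deriv φ x * deriv g x)
include hf hg hφ hφ_pos hfgφ

theorem monotoneOn_sq_mul_sub_mul_add_of_sq_deriv_le (t : ℝ) :
    MonotoneOn (fun x => t ^ 2 * φ x - 2 * t * f x + g x) (Icc a b) := by
  have hdiff : ∀ x ∈ Icc a b, DifferentiableAt ℝ (fun x => t ^ 2 * φ x - 2 * t * f x + g x) x :=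
    fun x hx => (((hφ x hx).const_mul _).sub ((hf x hx).const_mul _)).add (hg x hx)
  refine monotoneOn_of_deriv_nonneg (convex_Icc a b)
    (fun x hx => (hdiff x hx).continuousAt.continuousWithinAt)
    (fun x hx => (hdiff x (interior_subset hx)).differentiableWithinAt) fun x hx => ?_
  rw [interior_Icc] at hx
  have hx' := Ioo_subset_Icc_self hx
  rw [((((hφ x hx').hasDerivAt.const_mul _).fun_sub ((hf x hx').hasDerivAt.const_mul _)).fun_add
    (hg x hx').hasDerivAt).deriv]
  have := hfgφ x hx
  have := hφ_pos x hx
  nlinarith [sq_nonneg (deriv φ x * t - deriv f x)]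

theorem sub_sq_le_mul_of_sq_deriv_le (hab : a ≤ b) :
    (f b - f a) ^ 2 ≤ (φ b - φ a) * (g b - g a) := by
  have hquad : ∀ t : ℝ, 0 ≤ (φ b - φ a) * (t * t) + (-2 * (f b - f a)) * t + (g b - g a) := by
    intro t
    have := monotoneOn_sq_mul_sub_mul_add_of_sq_deriv_le hf hg hφ hφ_pos hfgφ t
      (left_mem_Icc.2 hab) (right_mem_Icc.2 hab) hab
    simp only at this
    nlinarith
  have := discrim_le_zero hquad
  rw [discrim] at this
  nlinarith

end CauchySchwarz

theorem sub_sq_le_log_div_mul_of_two_mul_sq_deriv_le {f g : ℝ → ℝ} {a b : ℝ} (ha : 0 < a)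
    (hab : a ≤ b) (hf : ∀ x ∈ Icc a b, DifferentiableAt ℝ f x)
    (hg : ∀ x ∈ Icc a b, DifferentiableAt ℝ g x)
    (hfg : ∀ x ∈ Ioo a b, 2 * x * deriv f x ^ 2 ≤ deriv g x) :
    (f b - f a) ^ 2 ≤ (Real.log b - Real.log a) / 2 * (g b - g a) := by
  have hpos : ∀ x ∈ Icc a b, 0 < x := fun x hx => ha.trans_le hx.1
  have hlog : ∀ x ∈ Icc a b, HasDerivAt (fun s => Real.log s / 2) (x⁻¹ / 2) x :=
    fun x hx => (Real.hasDerivAt_log (hpos x hx).ne').div_const 2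
  have hcs := sub_sq_le_mul_of_sq_deriv_le hf hg (fun x hx => (hlog x hx).differentiableAt)
    (fun x hx => by
      have := hpos x (Ioo_subset_Icc_self hx)
      rw [(hlog x (Ioo_subset_Icc_self hx)).deriv]
      positivity)
    (fun x hx => by
      have := hpos x (Ioo_subset_Icc_self hx)
      rw [(hlog x (Ioo_subset_Icc_self hx)).deriv]
      calc deriv f x ^ 2 = x⁻¹ / 2 * (2 * x * deriv f x ^ 2) := by field_simp
        _ ≤ x⁻¹ / 2 * deriv g x := by gcongr; exact hfg x hx)
    hab
  rwa [← sub_div] at hcs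

theorem statement1_general (W M : ℝ → ℝ)
    (hM0 : ∀ r > (0:ℝ), 0 ≤ M r)
    (hWdiff : ∀ r > (0:ℝ), DifferentiableAt ℝ W r)
    (hsqrtdiff : ∀ r > (0:ℝ), DifferentiableAt ℝ (fun s => Real.sqrt (M s)) r)
    (hineq : ∀ r > (0:ℝ), 2 * r * (deriv (fun s => Real.sqrt (M s)) r) ^ 2 ≤ deriv W r) :
    ∀ r > (0:ℝ), ∀ η ∈ Set.Ioo (0:ℝ) 1,
      M r ≤ |Real.log η| * (W r - W (η * r)) + 2 * M (η * r) := by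
  intro r hr η ⟨hη0, hη1⟩
  have hηr : 0 < η * r := mul_pos hη0 hr
  have hpos : ∀ x ∈ Icc (η * r) r, 0 < x := fun x hx => hηr.trans_le hx.1
  have hcs := sub_sq_le_log_div_mul_of_two_mul_sq_deriv_le hηr (by nlinarith)
    (fun x hx => hsqrtdiff x (hpos x hx)) (fun x hx => hWdiff x (hpos x hx))
    (fun x hx => hineq x (hpos x (Ioo_subset_Icc_self hx)))
  have hlog_gap : Real.log r - Real.log (η * r) = |Real.log η| := by
    rw [abs_of_neg (Real.log_neg hη0 hη1), Real.log_mul hη0.ne' hr.ne']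
    ring
  rw [hlog_gap] at hcs
  have := Real.sq_sqrt (hM0 r hr)
  have := Real.sq_sqrt (hM0 _ hηr)
  nlinarith [sq_nonneg (Real.sqrt (M r) - 2 * Real.sqrt (M (η * r)))]

/-- Abstract Monneau–Weiss inequality with logarithmic error. -/
theorem statement1 (W M : ℝ → ℝ)
    (hW0 : ∀ r > (0:ℝ), 0 ≤ W r) (hM0 : ∀ r > (0:ℝ), 0 ≤ M r)
    (hWdiff : ∀ r > (0:ℝ), DifferentiableAt ℝ W r)
    (hMdiff : ∀ r > (0:ℝ), DifferentiableAt ℝ M r)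
    (hsqrtdiff : ∀ r > (0:ℝ), DifferentiableAt ℝ (fun s => Real.sqrt (M s)) r)
    (hWmono : MonotoneOn W (Set.Ioi 0))
    (hineq : ∀ r > (0:ℝ), 2 * r * (deriv (fun s => Real.sqrt (M s)) r) ^ 2 ≤ deriv W r) :
    ∀ r > (0:ℝ), ∀ η ∈ Set.Ioo (0:ℝ) 1,
      M r ≤ |Real.log η| * (W r - W (η * r)) + 2 * M (η * r) :=
  statement1_general W M hM0 hWdiff hsqrtdiff hineq
end

section
/- Let $p \geq 16$ be fixed, let $\Lambda > 0$ be large, set $K = \mathbb{N} \cap [\tfrac14\log_2\Lambda, \log_2\Lambda - 5]$, and let $\Theta : [2, \Lambda/2] \to [0,\infty)$ be a nondecreasing function satisfying the cubic growth bound $\Theta(r) \leq C_0\,\Theta(2)\,r^3$ for all $4 \leq r \leq \Lambda/2$, with $\Theta(2) > 0$. Then, provided $\Lambda$ is large enough depending only on $C_0$ and $p$, there exists $r \in (\Lambda^{1/4}, \Lambda/8)$ of the form $r = 2^{\ell/p}$ with $\ell \in \mathbb{N}$, and an index $k \in K$ with $r \in [2^{k+1}, 2^{k+2}]$, such that simultaneously: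 (i) $\Theta(2^{1/p} r) \leq 2\,\Theta(r)$, and (ii) $\frac{\Theta(2^{k+1}) - \Theta(2^k)}{2^{2k}} \geq M$, where $M$ is the median of the values $\{\frac{\Theta(2^{j+1}) - \Theta(2^j)}{2^{2j}} : j \in K\}$. -/
/-!
At least half of the indices `k ∈ K` have `a k` at least the median. If on each of their annuli
`[2^(k+1), 2^(k+2)]` every one of the `p` steps `2^(ℓ/p) ↦ 2^((ℓ+1)/p)` more than doubled `Θ`,
then `Θ` would grow by a factor `2^p` across each such annulus, hence by `2^(p #K / 2) ≥ 2^(8 #K)`,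
roughly `Λ^6`, between `2` and `Λ/8`, against the cubic bound.
-/

open Finset Real

namespace Finset

variable {α β : Type*} [LinearOrder β]

def upperHalf (s : Finset α) (f : α → β) : Finset α :=
  s.filter fun x => #s ≤ 2 * #(s.filter fun y => f y ≤ f x)

theorem card_le_two_mul_card_upperHalf [DecidableEq α] (s : Finset α) (f : α → β) :
    #s ≤ 2 * #(s.upperHalf f) := by
  have hsplit : #(s \ s.upperHalf f) + #(s.upperHalf f) = #s :=
    card_sdiff_add_card_eq_card (filter_subset _ s)
  rcases (s \ s.upperHalf f).eq_empty_or_nonempty with hempty | hne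
  · rw [hempty, card_empty] at hsplit
    omega
  · -- everything outside the upper half lies below its largest value `f t`
    obtain ⟨t, ht, hmax⟩ := (s \ s.upperHalf f).exists_max_image f hne
    have hts := mem_sdiff.mp ht
    have hlow : s \ s.upperHalf f ⊆ s.filter fun y => f y ≤ f t :=
      fun x hx => mem_filter.mpr ⟨(mem_sdiff.mp hx).1, hmax x hx⟩
    have hsmall : ¬ #s ≤ 2 * #(s.filter fun y => f y ≤ f t) :=
      fun h => hts.2 (mem_filter.mpr ⟨hts.1, h⟩)
    have := card_le_card hlow
    omega

end Finset

section Growth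

variable {R : Type*} [Semiring R] [LinearOrder R] [IsStrictOrderedRing R]

theorem pow_mul_le_of_forall_mul_le_succ {g : ℕ → R} {c : R} (hc : 0 ≤ c) {a n : ℕ}
    (hg : ∀ i < n, c * g (a + i) ≤ g (a + i + 1)) : c ^ n * g a ≤ g (a + n) := by
  induction n with
  | zero => simp
  | succ n ih =>
    calc c ^ (n + 1) * g a = c * (c ^ n * g a) := by rw [pow_succ', mul_assoc]
      _ ≤ c * g (a + n) := mul_le_mul_of_nonneg_left (ih fun i hi => hg i (by omega)) hc
      _ ≤ g (a + (n + 1)) := hg n n.lt_succ_self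

theorem exists_succ_le_mul_of_lt_pow_mul {g : ℕ → R} {c : R} (hc : 0 ≤ c) {a n : ℕ}
    (h : g (a + n) < c ^ n * g a) : ∃ i < n, g (a + i + 1) ≤ c * g (a + i) := by
  by_contra! H
  exact h.not_ge (pow_mul_le_of_forall_mul_le_succ hc fun i hi => (H i hi).le)

theorem pow_card_mul_le_of_monotoneOn {u : ℕ → R} {c : R} (hc : 0 ≤ c) {S : Finset ℕ}
    (hS : ∀ m ∈ S, c * u m ≤ u (m + 1)) {a b : ℕ} (hab : a ≤ b)
    (hu : MonotoneOn u (Set.Icc a b)) (hSab : S ⊆ Ico a b) : c ^ #S * u a ≤ u b := by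
  induction S using Finset.induction_on_max generalizing b with
  | empty => simpa using hu ⟨le_rfl, hab⟩ ⟨hab, le_rfl⟩ hab
  | insert m T hlt ih =>
    have hm := mem_Ico.mp (hSab (mem_insert_self m T))
    have hT : c ^ #T * u a ≤ u m :=
      ih (fun x hx => hS x (mem_insert_of_mem hx)) hm.1
        (hu.mono (Set.Icc_subset_Icc le_rfl hm.2.le))
        fun x hx => mem_Ico.mpr ⟨(mem_Ico.mp (hSab (mem_insert_of_mem hx))).1, hlt x hx⟩
    rw [card_insert_of_notMem fun hmT => (hlt m hmT).false]
    calc c ^ (#T + 1) * u a = c * (c ^ #T * u a) := by rw [pow_succ', mul_assoc]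
      _ ≤ c * u m := mul_le_mul_of_nonneg_left hT hc
      _ ≤ u (m + 1) := hS m (mem_insert_self m T)
      _ ≤ u b := hu ⟨by omega, hm.2⟩ ⟨hab, le_rfl⟩ hm.2

end Growth

theorem two_pow_le_two_rpow_div_iff {p : ℕ} (hp : 0 < p) (n ℓ : ℕ) :
    (2 : ℝ) ^ n ≤ 2 ^ ((ℓ : ℝ) / p) ↔ p * n ≤ ℓ := by
  rw [← rpow_natCast, rpow_le_rpow_left_iff one_lt_two, le_div_iff₀ (by exact_mod_cast hp)]
  norm_cast
  rw [mul_comm]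

theorem exists_doubling_scale_of_lt_two_pow_mul {p m : ℕ} (hp : 0 < p) {Θ : ℝ → ℝ}
    (h : Θ (2 ^ (m + 2)) < 2 ^ p * Θ (2 ^ (m + 1))) :
    ∃ ℓ : ℕ, (2 : ℝ) ^ (m + 1) ≤ 2 ^ ((ℓ : ℝ) / p) ∧
      (2 : ℝ) ^ ((ℓ : ℝ) / p) < 2 ^ (m + 2) ∧
      Θ (2 ^ ((p : ℝ)⁻¹) * 2 ^ ((ℓ : ℝ) / p)) ≤ 2 * Θ (2 ^ ((ℓ : ℝ) / p)) := by
  have hp' : (p : ℝ) ≠ 0 := by exact_mod_cast hp.ne'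
  set g : ℕ → ℝ := fun ℓ => Θ (2 ^ ((ℓ : ℝ) / p))
  have hg : ∀ n : ℕ, g (p * n) = Θ (2 ^ n) := fun n => by
    simp only [g, Nat.cast_mul, mul_div_cancel_left₀ _ hp', rpow_natCast]
  obtain ⟨i, hi, hdouble⟩ :=
    exists_succ_le_mul_of_lt_pow_mul (g := g) (a := p * (m + 1)) (n := p) zero_le_two
      (by rwa [← mul_add_one, hg, hg])
  refine ⟨p * (m + 1) + i, (two_pow_le_two_rpow_div_iff hp _ _).2 (by omega),
    not_le.1 fun hle => ?_, ?_⟩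
  · have := (two_pow_le_two_rpow_div_iff hp _ _).1 hle
    linarith [mul_add_one p (m + 1)]
  · have hsucc : (p : ℝ)⁻¹ + ((p * (m + 1) + i : ℕ) : ℝ) / p
        = ((p * (m + 1) + i + 1 : ℕ) : ℝ) / p := by
      push_cast
      field_simp
      ring
    rwa [← rpow_add two_pos, hsucc]

theorem exists_mem_lt_two_pow_mul_of_cubic {p N n : ℕ} {C0 Λ : ℝ} {Θ : ℝ → ℝ} {S : Finset ℕ}
    (hmono : MonotoneOn Θ (Set.Icc 2 (Λ / 2))) (hΘ2 : 0 < Θ 2)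
    (hcubic : ∀ r : ℝ, 4 ≤ r → r ≤ Λ / 2 → Θ r ≤ C0 * Θ 2 * r ^ 3) (hC0 : C0 < 2 ^ N)
    (hn : (2 : ℝ) ^ (n + 2) ≤ Λ / 2) (hS : ∀ m ∈ S, m ≤ n)
    (hcard : N + 3 * (n + 2) ≤ p * #S) :
    ∃ m ∈ S, Θ (2 ^ (m + 2)) < 2 ^ p * Θ (2 ^ (m + 1)) := by
  by_contra! hgrowth
  have hu : MonotoneOn (fun m : ℕ => Θ (2 ^ (m + 1))) (Set.Icc 0 (n + 1)) := by
    have hmem : ∀ m ∈ Set.Icc 0 (n + 1), (2 : ℝ) ^ (m + 1) ∈ Set.Icc 2 (Λ / 2) := fun m hm =>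
      ⟨le_self_pow₀ one_le_two m.succ_ne_zero,
        (pow_le_pow_right₀ one_le_two (Nat.succ_le_succ hm.2)).trans hn⟩
    exact fun a ha b hb hab =>
      hmono (hmem a ha) (hmem b hb) (pow_le_pow_right₀ one_le_two (by omega))
  have hlower : 2 ^ (p * #S) * Θ 2 ≤ Θ (2 ^ (n + 2)) := by
    have hchain := pow_card_mul_le_of_monotoneOn (u := fun m : ℕ => Θ (2 ^ (m + 1)))
      (c := (2 : ℝ) ^ p) (by positivity) hgrowth (Nat.zero_le _) hu
      fun m hm => mem_Ico.2 ⟨Nat.zero_le m, Nat.lt_succ_of_le (hS m hm)⟩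
    rwa [← pow_mul, zero_add, pow_one] at hchain
  have hupper : Θ (2 ^ (n + 2)) < 2 ^ (p * #S) * Θ 2 :=
    calc Θ (2 ^ (n + 2)) ≤ C0 * Θ 2 * ((2 : ℝ) ^ (n + 2)) ^ 3 :=
          hcubic _ ((by norm_num : (4 : ℝ) = 2 ^ 2).le.trans
            (pow_le_pow_right₀ one_le_two (by omega))) hn
      _ < 2 ^ N * Θ 2 * ((2 : ℝ) ^ (n + 2)) ^ 3 := by gcongr
      _ = 2 ^ (N + 3 * (n + 2)) * Θ 2 := by ring
      _ ≤ 2 ^ (p * #S) * Θ 2 := by gcongr; exact one_le_two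
  exact hupper.not_ge hlower

theorem rpow_inv_four_le_two_pow_ceil {Λ : ℝ} (hΛ : 0 < Λ) :
    Λ ^ (4⁻¹ : ℝ) ≤ 2 ^ ⌈logb 2 Λ / 4⌉₊ := by
  rw [← rpow_natCast, ← logb_le_iff_le_rpow one_lt_two (by positivity),
    logb_rpow_eq_mul_logb_of_pos hΛ]
  linarith [Nat.le_ceil (logb 2 Λ / 4)]

theorem two_pow_floor_sub_five_add_five_le {Λ : ℝ} (hΛ : 0 < Λ) (hL : 5 ≤ logb 2 Λ) :
    (2 : ℝ) ^ (⌊logb 2 Λ - 5⌋₊ + 5) ≤ Λ := by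
  rw [← rpow_natCast, ← le_logb_iff_rpow_le one_lt_two hΛ]
  push_cast
  linarith [Nat.floor_le (sub_nonneg.2 hL)]

theorem add_three_mul_le_eight_mul_card_Icc {N : ℕ} {L : ℝ} (hL : N + 64 ≤ L) :
    N + 3 * (⌊L - 5⌋₊ + 2) ≤ 8 * #(Icc ⌈L / 4⌉₊ ⌊L - 5⌋₊) := by
  have hceil := Nat.ceil_lt_add_one (by linarith : 0 ≤ L / 4)
  have hfloor := Nat.lt_floor_add_one (L - 5)
  have hreal : (N : ℝ) + 8 * ⌈L / 4⌉₊ + 3 * (⌊L - 5⌋₊ + 2) < 8 * (⌊L - 5⌋₊ + 1) := by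
    linarith
  have hnat : N + 8 * ⌈L / 4⌉₊ + 3 * (⌊L - 5⌋₊ + 2) < 8 * (⌊L - 5⌋₊ + 1) := by
    exact_mod_cast hreal
  rw [Nat.card_Icc]
  omega

theorem statement12_general (p : ℕ) (hp : 16 ≤ p) (C0 : ℝ) :
    ∃ Λ0 : ℝ, ∀ Λ : ℝ, Λ0 ≤ Λ →
      ∀ Θ : ℝ → ℝ,
        MonotoneOn Θ (Set.Icc 2 (Λ / 2)) →
        0 < Θ 2 →
        (∀ r : ℝ, 4 ≤ r → r ≤ Λ / 2 → Θ r ≤ C0 * Θ 2 * r ^ 3) →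
        ∃ ℓ k : ℕ,
          let r : ℝ := (2 : ℝ) ^ ((ℓ : ℝ) / (p : ℝ))
          let K : Finset ℕ := Finset.Icc ⌈Real.logb 2 Λ / 4⌉₊ ⌊Real.logb 2 Λ - 5⌋₊
          let A : ℕ → ℝ := fun j => (Θ ((2:ℝ) ^ (j + 1)) - Θ ((2:ℝ) ^ j)) / (2:ℝ) ^ (2 * j)
          Λ ^ ((4 : ℝ)⁻¹) < r ∧ r < Λ / 8 ∧
          k ∈ K ∧
          (2:ℝ) ^ (k + 1) ≤ r ∧ r ≤ (2:ℝ) ^ (k + 2) ∧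
          Θ ((2 : ℝ) ^ ((p : ℝ)⁻¹) * r) ≤ 2 * Θ r ∧
          K.card ≤ 2 * (K.filter (fun j => A j ≤ A k)).card := by
  obtain ⟨N, hN⟩ := pow_unbounded_of_one_lt C0 one_lt_two
  refine ⟨2 ^ (N + 64), fun Λ hΛ Θ hmono hΘ2 hcubic => ?_⟩
  have hΛpos : 0 < Λ := lt_of_lt_of_le (by positivity) hΛ
  have hL : (N : ℝ) + 64 ≤ logb 2 Λ := by
    rw [le_logb_iff_rpow_le one_lt_two hΛpos]
    exact_mod_cast hΛ
  set K := Icc ⌈logb 2 Λ / 4⌉₊ ⌊logb 2 Λ - 5⌋₊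
  set A : ℕ → ℝ := fun j => (Θ (2 ^ (j + 1)) - Θ (2 ^ j)) / 2 ^ (2 * j)
  have htop := two_pow_floor_sub_five_add_five_le hΛpos (by linarith)
  have hcard : N + 3 * (⌊logb 2 Λ - 5⌋₊ + 2) ≤ p * #(K.upperHalf A) := by
    have hK := add_three_mul_le_eight_mul_card_Icc hL
    have hhalf := card_le_two_mul_card_upperHalf K A
    nlinarith
  obtain ⟨m, hmS, hm⟩ := exists_mem_lt_two_pow_mul_of_cubic hmono hΘ2 hcubic hN
    (by rw [pow_add] at htop ⊢; linarith) (fun x hx => (mem_Icc.1 (mem_filter.1 hx).1).2)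
    hcard
  obtain ⟨hmK, hmedian⟩ := mem_filter.1 hmS
  obtain ⟨ℓ, hlo, hhi, hdouble⟩ := exists_doubling_scale_of_lt_two_pow_mul (by omega) hm
  refine ⟨ℓ, m, ?_, ?_, hmK, hlo, hhi.le, hdouble, hmedian⟩
  · calc Λ ^ (4⁻¹ : ℝ) ≤ 2 ^ ⌈logb 2 Λ / 4⌉₊ := rpow_inv_four_le_two_pow_ceil hΛpos
      _ < 2 ^ (m + 1) := pow_lt_pow_right₀ one_lt_two (by linarith [(mem_Icc.1 hmK).1])
      _ ≤ _ := hlo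
  · calc (2 : ℝ) ^ ((ℓ : ℝ) / p) < 2 ^ (m + 2) := hhi
      _ ≤ 2 ^ (⌊logb 2 Λ - 5⌋₊ + 2) :=
        pow_le_pow_right₀ one_le_two (by linarith [(mem_Icc.1 hmK).2])
      _ ≤ Λ / 8 := by rw [pow_add] at htop ⊢; linarith

/-- Pigeonhole/doubling lemma: for a nondecreasing function `Θ` with cubic growth on
`[2, Λ/2]`, for `Λ` large one finds a dyadic-type scale `r = 2^(ℓ/p) ∈ (Λ^{1/4}, Λ/8)` at which
`Θ` doubles at most, lying in a dyadic annulus `[2^{k+1}, 2^{k+2}]` whose increment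
`a k = (Θ(2^{k+1}) - Θ(2^k))/2^{2k}` is at least the median `M` of `{a j : j ∈ K}`
(encoded as: at least half of the indices `j ∈ K` satisfy `a j ≤ a k`). -/
theorem statement12 (p : ℕ) (hp : 16 ≤ p) (C0 : ℝ) (hC0 : 0 < C0) :
    ∃ Λ0 : ℝ, ∀ Λ : ℝ, Λ0 ≤ Λ →
      ∀ Θ : ℝ → ℝ,
        MonotoneOn Θ (Set.Icc 2 (Λ / 2)) →
        0 < Θ 2 →
        (∀ r : ℝ, 4 ≤ r → r ≤ Λ / 2 → Θ r ≤ C0 * Θ 2 * r ^ 3) →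
        ∃ ℓ k : ℕ,
          let r : ℝ := (2 : ℝ) ^ ((ℓ : ℝ) / (p : ℝ))
          let K : Finset ℕ := Finset.Icc ⌈Real.logb 2 Λ / 4⌉₊ ⌊Real.logb 2 Λ - 5⌋₊
          let A : ℕ → ℝ := fun j => (Θ ((2:ℝ) ^ (j + 1)) - Θ ((2:ℝ) ^ j)) / (2:ℝ) ^ (2 * j)
          Λ ^ ((4 : ℝ)⁻¹) < r ∧ r < Λ / 8 ∧
          k ∈ K ∧
          (2:ℝ) ^ (k + 1) ≤ r ∧ r ≤ (2:ℝ) ^ (k + 2) ∧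
          Θ ((2 : ℝ) ^ ((p : ℝ)⁻¹) * r) ≤ 2 * Θ r ∧
          K.card ≤ 2 * (K.filter (fun j => A j ≤ A k)).card :=
  statement12_general p hp C0
end
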